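/- arXiv:1202.3500 — 3 statements merged into one kernel-verified Lean document; each statement's English description precedes it below -/
import Mathlib

section
/- Let V be a finite nonempty set of first-order variables, let L=(S,s₀,Δ,ρ) be a (ground) labeled transition system, and let φ be an Lμω formula all of whose free first-order variables lie in V. Then L ⊨ φ (i.e. the constant valuation x↦s₀ satisfies φ) if and only if Clone_V(L) ⊨ φ̂, where φ̂ is the one-dimensional translation of φ and Clone_V(L) is the V-clone of L. -/
/-- A labeled transition system over edge labels `Λ` and atomic propositions `P`. -/
structure LTS (Λ P : Type) where
  S : Type
  s0 : S
  Tr : S → Λ → S → Prop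
  rho : S → Set P

/-- Formulas of the higher-dimensional modal μ-calculus Lμω. -/
inductive Formula (Λ P V V2 : Type) : Type
  | prop : P → V → Formula Λ P V V2
  | svar : V2 → Formula Λ P V V2
  | neg : Formula Λ P V V2 → Formula Λ P V V2
  | and : Formula Λ P V V2 → Formula Λ P V V2 → Formula Λ P V V2
  | dia : Λ → V → Formula Λ P V V2 → Formula Λ P V V2
  | mu : V2 → Formula Λ P V V2 → Formula Λ P V V2
  | repl : (V → V) → Formula Λ P V V2 → Formula Λ P V V2

variable {Λ P V V2 : Type}

/-- Semantics of Lμω : a set of first-order valuations. -/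
def sem [DecidableEq V] [DecidableEq V2] (L : LTS Λ P) :
    Formula Λ P V V2 → (V2 → Set (V → L.S)) → Set (V → L.S)
  | .prop p x, _ => {v | p ∈ L.rho (v x)}
  | .svar X, 𝒱 => 𝒱 X
  | .neg φ, 𝒱 => (sem L φ 𝒱)ᶜ
  | .and φ ψ, 𝒱 => sem L φ 𝒱 ∩ sem L ψ 𝒱
  | .dia a x φ, 𝒱 => {v | ∃ s, L.Tr (v x) a s ∧ Function.update v x s ∈ sem L φ 𝒱}
  | .mu X φ, 𝒱 => ⋂₀ {Q | sem L φ (Function.update 𝒱 X Q) ⊆ Q}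
  | .repl κ φ, 𝒱 => {v | (fun z => v (κ z)) ∈ sem L φ 𝒱}

/-- Derived operator: disjunction. -/
def Formula.or (φ ψ : Formula Λ P V V2) : Formula Λ P V V2 := .neg (.and (.neg φ) (.neg ψ))

/-- Derived operator: box modality. -/
def Formula.box (a : Λ) (x : V) (φ : Formula Λ P V V2) : Formula Λ P V V2 :=
  .neg (.dia a x (.neg φ))

/-- Replace every occurrence of the second-order variable `X` by `¬X`. -/
def Formula.substNeg [DecidableEq V2] (X : V2) : Formula Λ P V V2 → Formula Λ P V V2
  | .prop p x => .prop p x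
  | .svar Y => if Y = X then .neg (.svar Y) else .svar Y
  | .neg φ => .neg (φ.substNeg X)
  | .and φ ψ => .and (φ.substNeg X) (ψ.substNeg X)
  | .dia a x φ => .dia a x (φ.substNeg X)
  | .mu Y φ => .mu Y (φ.substNeg X)
  | .repl κ φ => .repl κ (φ.substNeg X)

/-- Derived operator: greatest fixed point, `νX.φ := ¬μX.¬φ[X:=¬X]`. -/
def Formula.nu [DecidableEq V2] (X : V2) (φ : Formula Λ P V V2) : Formula Λ P V V2 :=
  .neg (.mu X (.neg (φ.substNeg X)))

/-- Falsity, definable as `μX.X`. -/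
def Formula.bot (X : V2) : Formula Λ P V V2 := .mu X (.svar X)

/-- Truth. -/
def Formula.top (X : V2) : Formula Λ P V V2 := .neg (.bot X)

/-- Finite conjunction (`X` is a dummy second-order variable for the empty case). -/
def bigAnd (X : V2) (l : List (Formula Λ P V V2)) : Formula Λ P V V2 := l.foldr .and (.top X)

/-- Finite disjunction. -/
def bigOr (X : V2) (l : List (Formula Λ P V V2)) : Formula Λ P V V2 := l.foldr .or (.bot X)

/-- Derived operator: implication. -/
def Formula.imp (φ ψ : Formula Λ P V V2) : Formula Λ P V V2 := .neg (.and φ (.neg ψ))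

/-- Derived operator: bi-implication. -/
def Formula.iff (φ ψ : Formula Λ P V V2) : Formula Λ P V V2 := .and (φ.imp ψ) (ψ.imp φ)

/-- Formulas of the ordinary (one-dimensional) modal μ-calculus. -/
inductive MFormula (Λ P V2 : Type) : Type
  | prop : P → MFormula Λ P V2
  | svar : V2 → MFormula Λ P V2
  | neg : MFormula Λ P V2 → MFormula Λ P V2
  | and : MFormula Λ P V2 → MFormula Λ P V2 → MFormula Λ P V2
  | dia : Λ → MFormula Λ P V2 → MFormula Λ P V2
  | mu : V2 → MFormula Λ P V2 → MFormula Λ P V2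

/-- Semantics of the ordinary modal μ-calculus: a set of states. -/
def msem {Λ P V2 : Type} [DecidableEq V2] (L : LTS Λ P) :
    MFormula Λ P V2 → (V2 → Set L.S) → Set L.S
  | .prop p, _ => {s | p ∈ L.rho s}
  | .svar X, 𝒱 => 𝒱 X
  | .neg φ, 𝒱 => (msem L φ 𝒱)ᶜ
  | .and φ ψ, 𝒱 => msem L φ 𝒱 ∩ msem L ψ 𝒱
  | .dia a φ, 𝒱 => {s | ∃ t, L.Tr s a t ∧ t ∈ msem L φ 𝒱}
  | .mu X φ, 𝒱 => ⋂₀ {Q | msem L φ (Function.update 𝒱 X Q) ⊆ Q}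

/-- Derived box modality of the ordinary modal μ-calculus. -/
def MFormula.box {Λ P V2 : Type} (a : Λ) (φ : MFormula Λ P V2) : MFormula Λ P V2 :=
  .neg (.dia a (.neg φ))

/-- The `V`-clone of a ground LTS `L`: states are valuations `V → L.S`; it interprets the
propositions `p_x` (pairs `(p,x)`), the modal labels `a_x` (pairs `(a,x)`, `Sum.inl`) and
the replacement labels `κ : V → V` (`Sum.inr`). -/
def clone {Λ P : Type} (V : Type) [DecidableEq V] (L : LTS Λ P) :
    LTS (Λ × V ⊕ (V → V)) (P × V) where
  S := V → L.S
  s0 := fun _ => L.s0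
  Tr := fun v ℓ v' =>
    match ℓ with
    | .inl (a, x) => ∃ t, L.Tr (v x) a t ∧ v' = Function.update v x t
    | .inr κ => v' = fun z => v (κ z)
  rho := fun v => {px | px.1 ∈ L.rho (v px.2)}

/-- The free second-order variables of an Lμω formula. -/
def fv2 {Λ P V V2 : Type} : Formula Λ P V V2 → Set V2
  | .prop _ _ => ∅
  | .svar X => {X}
  | .neg φ => fv2 φ
  | .and φ ψ => fv2 φ ∪ fv2 ψ
  | .dia _ _ φ => fv2 φ
  | .mu X φ => fv2 φ \ {X}
  | .repl _ φ => fv2 φ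

/-- The one-dimensional translation `φ ↦ φ̂` of an Lμω formula whose first-order variables
come from `V`, into the ordinary modal μ-calculus over propositions `P × V` and labels
`Λ × V ⊕ (V → V)`. -/
def hat {Λ P V V2 : Type} : Formula Λ P V V2 → MFormula (Λ × V ⊕ (V → V)) (P × V) V2
  | .prop p x => .prop (p, x)
  | .svar X => .svar X
  | .neg φ => .neg (hat φ)
  | .and φ ψ => .and (hat φ) (hat ψ)
  | .dia a x φ => .dia (.inl (a, x)) (hat φ)
  | .mu X φ => .mu X (hat φ)
  | .repl κ φ => .dia (.inr κ) (hat φ)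

/-! The clone is built so that an `a_x`-step and a `κ`-step act on a valuation exactly as
`⟨a⟩_x` and `{κ}` act in Lμω. Hence `⟦φ⟧` and `⟦φ̂⟧` are literally the same set of valuations,
for every interpretation of the second-order variables (structural induction, with the
fixed-point case carried by the generalised interpretation); the theorem is its instance at
the constant valuation. -/

section Clone

variable {Λ P V V2 : Type} [DecidableEq V] [DecidableEq V2] (L : LTS Λ P)

theorem mem_msem_clone_dia_inl (a : Λ) (x : V) (ψ : MFormula (Λ × V ⊕ (V → V)) (P × V) V2)
    (𝒱 : V2 → Set (V → L.S)) (v : V → L.S) :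
    v ∈ msem (clone V L) (.dia (.inl (a, x)) ψ) 𝒱 ↔
      ∃ s, L.Tr (v x) a s ∧ Function.update v x s ∈ msem (clone V L) ψ 𝒱 := by
  constructor
  · rintro ⟨_, ⟨s, hs, rfl⟩, hψ⟩
    exact ⟨s, hs, hψ⟩
  · rintro ⟨s, hs, hψ⟩
    exact ⟨_, ⟨s, hs, rfl⟩, hψ⟩

theorem mem_msem_clone_dia_inr (κ : V → V) (ψ : MFormula (Λ × V ⊕ (V → V)) (P × V) V2)
    (𝒱 : V2 → Set (V → L.S)) (v : V → L.S) :
    v ∈ msem (clone V L) (.dia (.inr κ) ψ) 𝒱 ↔ (fun z => v (κ z)) ∈ msem (clone V L) ψ 𝒱 := by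
  constructor
  · rintro ⟨_, rfl, hψ⟩
    exact hψ
  · intro hψ
    exact ⟨_, rfl, hψ⟩

theorem sem_eq_msem_clone_hat (φ : Formula Λ P V V2) (𝒱 : V2 → Set (V → L.S)) :
    sem L φ 𝒱 = msem (clone V L) (hat φ) 𝒱 := by
  induction φ generalizing 𝒱 with
  | prop p x => rfl
  | svar X => rfl
  | neg φ ih => exact congrArg compl (ih 𝒱)
  | and φ ψ ihφ ihψ => exact congrArg₂ (· ∩ ·) (ihφ 𝒱) (ihψ 𝒱)
  | dia a x φ ih =>
    ext v
    exact (exists_congr fun s => and_congr_right' (Set.ext_iff.mp (ih 𝒱) _)).trans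
      (mem_msem_clone_dia_inl L a x (hat φ) 𝒱 v).symm
  | mu X φ ih => exact congrArg (fun F => ⋂₀ {Q | F Q ⊆ Q}) (funext fun Q => ih _)
  | repl κ φ ih =>
    ext v
    exact (Set.ext_iff.mp (ih 𝒱) _).trans (mem_msem_clone_dia_inr L κ (hat φ) 𝒱 v).symm

end Clone

theorem clone_reduction_general {Λ P V V2 : Type} [DecidableEq V]
    [DecidableEq V2] (L : LTS Λ P) (φ : Formula Λ P V V2) :
    ((fun _ => L.s0) ∈ sem L φ (fun _ => ∅)) ↔
      (clone V L).s0 ∈ msem (clone V L) (hat φ) (fun _ => ∅) := by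
  rw [sem_eq_msem_clone_hat]
  rfl

/-- Theorem 1 of the paper. Let `V` be a finite nonempty set of
first-order variables, `L` a ground LTS, and `φ` a closed Lμω formula whose first-order
variables lie in `V`.  Then `L ⊨ φ` (the constant valuation `x ↦ s₀` satisfies `φ`)
iff `Clone_V(L) ⊨ φ̂`. -/
theorem clone_reduction {Λ P V V2 : Type} [Fintype V] [Nonempty V] [DecidableEq V]
    [DecidableEq V2] (L : LTS Λ P) (φ : Formula Λ P V V2) (hclosed : fv2 φ = ∅) :
    ((fun _ => L.s0) ∈ sem L φ (fun _ => ∅)) ↔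
      (clone V L).s0 ∈ msem (clone V L) (hat φ) (fun _ => ∅) :=
  clone_reduction_general L φ
end

section
/- The higher-dimensional modal μ-calculus is closed under bisimulation: for every LTS L, every closed Lμω formula φ, and first-order valuations v, v', if v ∈ ⟦φ⟧_L and v ∼ v' (i.e. v(x) and v'(x) are bisimilar states for every first-order variable x), then v' ∈ ⟦φ⟧_L. -/
variable {Λ P V V2 : Type}

/-- A simulation on an LTS: related states satisfy the same propositions and every move
of the first state can be matched by the second. -/
def IsSimulation {Λ P : Type} (L : LTS Λ P) (R : L.S → L.S → Prop) : Prop :=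
  ∀ s₁ s₂, R s₁ s₂ →
    (∀ p, p ∈ L.rho s₁ ↔ p ∈ L.rho s₂) ∧
    ∀ a s₁', L.Tr s₁ a s₁' → ∃ s₂', L.Tr s₂ a s₂' ∧ R s₁' s₂'

/-- A bisimulation is a symmetric simulation (`R = R⁻¹`). -/
def IsBisimulation {Λ P : Type} (L : LTS Λ P) (R : L.S → L.S → Prop) : Prop :=
  IsSimulation L R ∧ ∀ s t, R s t ↔ R t s

/-- Two states are bisimilar if some bisimulation contains them. -/
def Bisimilar {Λ P : Type} (L : LTS Λ P) (s t : L.S) : Prop :=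
  ∃ R, IsBisimulation L R ∧ R s t

/-- Two first-order valuations are bisimilar if they are pointwise bisimilar. -/
def BisimilarVal {Λ P V : Type} (L : LTS Λ P) (v v' : V → L.S) : Prop :=
  ∀ x, Bisimilar L (v x) (v' x)

/-- `Polarity X φ true` (`false`) means every free occurrence of `X` in `φ` lies under an
even (odd) number of negations. -/
def Polarity {Λ P V V2 : Type} (X : V2) : Formula Λ P V V2 → Bool → Prop
  | .prop _ _, _ => True
  | .svar Y, b => Y = X → b = true
  | .neg φ, b => Polarity X φ (!b)
  | .and φ ψ, b => Polarity X φ b ∧ Polarity X ψ b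
  | .dia _ _ φ, b => Polarity X φ b
  | .mu Y φ, b => Y = X ∨ Polarity X φ b
  | .repl _ φ, b => Polarity X φ b

/-- Well-formedness: every μ-bound second-order variable occurs only under an even number
of negations underneath its binder. -/
def WellFormed {Λ P V V2 : Type} : Formula Λ P V V2 → Prop
  | .prop _ _ => True
  | .svar _ => True
  | .neg φ => WellFormed φ
  | .and φ ψ => WellFormed φ ∧ WellFormed ψ
  | .dia _ _ φ => WellFormed φ
  | .mu X φ => Polarity X φ true ∧ WellFormed φ
  | .repl _ φ => WellFormed φ

/-!
Induction on `φ`, for arbitrary interpretations of the second-order variables by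
bisimulation-invariant sets. The only non-routine case is `μX.φ`: if `Q` is a prefixed point,
so is its bisimulation kernel `{w | every w' ∼ w lies in Q}`, because the body is monotone in
`X` (well-formedness) and maps invariant sets to invariant sets (induction). The least fixed
point therefore lies in the kernel of every prefixed point, which is what invariance asks for.
-/

open Function

section Bisimilarity

variable {L : LTS Λ P}

theorem IsSimulation.comp {R R' : L.S → L.S → Prop} (hR : IsSimulation L R)
    (hR' : IsSimulation L R') : IsSimulation L (Relation.Comp R R') := by
  rintro s₁ s₃ ⟨s₂, h₁₂, h₂₃⟩
  refine ⟨fun p => ((hR _ _ h₁₂).1 p).trans ((hR' _ _ h₂₃).1 p), fun a s₁' hs₁ => ?_⟩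
  obtain ⟨s₂', hs₂, h₁₂'⟩ := (hR _ _ h₁₂).2 a s₁' hs₁
  obtain ⟨s₃', hs₃, h₂₃'⟩ := (hR' _ _ h₂₃).2 a s₂' hs₂
  exact ⟨s₃', hs₃, s₂', h₁₂', h₂₃'⟩

theorem Bisimilar.refl (s : L.S) : Bisimilar L s s := by
  refine ⟨Eq, ⟨?_, fun _ _ => eq_comm⟩, rfl⟩
  rintro s _ rfl
  exact ⟨fun _ => Iff.rfl, fun _ s' h => ⟨s', h, rfl⟩⟩

theorem Bisimilar.symm {s t : L.S} : Bisimilar L s t → Bisimilar L t s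
  | ⟨R, hR, hst⟩ => ⟨R, hR, (hR.2 s t).mp hst⟩

theorem Bisimilar.mem_rho_iff {s t : L.S} (h : Bisimilar L s t) (p : P) :
    p ∈ L.rho s ↔ p ∈ L.rho t :=
  let ⟨_, hR, hst⟩ := h
  (hR.1 _ _ hst).1 p

theorem Bisimilar.exists_tr {s t s' : L.S} {a : Λ} (h : Bisimilar L s t) (hs : L.Tr s a s') :
    ∃ t', L.Tr t a t' ∧ Bisimilar L s' t' :=
  let ⟨R, hR, hst⟩ := h
  let ⟨t', ht, hst'⟩ := (hR.1 _ _ hst).2 a s' hs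
  ⟨t', ht, R, hR, hst'⟩

theorem isSimulation_bisimilar : IsSimulation L (Bisimilar L) :=
  fun _ _ h => ⟨h.mem_rho_iff, fun _ _ => h.exists_tr⟩

theorem Bisimilar.trans {s t u : L.S} (hst : Bisimilar L s t) (htu : Bisimilar L t u) :
    Bisimilar L s u := by
  refine ⟨Relation.Comp (Bisimilar L) (Bisimilar L),
    ⟨isSimulation_bisimilar.comp isSimulation_bisimilar, fun a b => ?_⟩, t, hst, htu⟩
  exact ⟨fun ⟨c, hac, hcb⟩ => ⟨c, hcb.symm, hac.symm⟩,
    fun ⟨c, hbc, hca⟩ => ⟨c, hca.symm, hbc.symm⟩⟩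

theorem BisimilarVal.refl (v : V → L.S) : BisimilarVal L v v :=
  fun x => Bisimilar.refl (v x)

theorem BisimilarVal.symm {v v' : V → L.S} (h : BisimilarVal L v v') : BisimilarVal L v' v :=
  fun x => (h x).symm

theorem BisimilarVal.trans {v v' v'' : V → L.S} (h : BisimilarVal L v v')
    (h' : BisimilarVal L v' v'') : BisimilarVal L v v'' :=
  fun x => (h x).trans (h' x)

theorem BisimilarVal.update [DecidableEq V] {v v' : V → L.S} (h : BisimilarVal L v v') (x : V)
    {s s' : L.S} (hs : Bisimilar L s s') : BisimilarVal L (update v x s) (update v' x s') := by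
  intro y
  rcases eq_or_ne y x with rfl | hyx
  · simpa using hs
  · simpa [hyx] using h y

end Bisimilarity

section Invariance

variable {L : LTS Λ P}

def BisimInvariant (L : LTS Λ P) (A : Set (V → L.S)) : Prop :=
  ∀ ⦃v v'⦄, v ∈ A → BisimilarVal L v v' → v' ∈ A

/-- The largest bisimulation-invariant subset of `Q`. -/
def bisimKernel (L : LTS Λ P) (Q : Set (V → L.S)) : Set (V → L.S) :=
  {w | ∀ w', BisimilarVal L w w' → w' ∈ Q}

theorem bisimKernel_subset (Q : Set (V → L.S)) : bisimKernel L Q ⊆ Q :=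
  fun w hw => hw w (BisimilarVal.refl w)

theorem bisimInvariant_bisimKernel (Q : Set (V → L.S)) : BisimInvariant L (bisimKernel L Q) :=
  fun _ _ hw hww' _ hw'w'' => hw _ (hww'.trans hw'w'')

variable [DecidableEq V] [DecidableEq V2]

theorem sem_subset_of_polarity {X : V2} {φ : Formula Λ P V V2} {b : Bool}
    (hpol : Polarity X φ b) (𝒱 : V2 → Set (V → L.S)) {Q Q' : Set (V → L.S)} (hQ : Q ⊆ Q') :
    sem L φ (update 𝒱 X (cond b Q Q')) ⊆ sem L φ (update 𝒱 X (cond b Q' Q)) := by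
  induction φ generalizing b 𝒱 with
  | prop => exact le_rfl
  | svar Y =>
    rcases eq_or_ne Y X with rfl | hYX
    · obtain rfl := hpol rfl
      simpa [sem] using hQ
    · simp [sem, hYX]
  | neg φ ih =>
    have := ih hpol 𝒱
    cases b <;> exact Set.compl_subset_compl.mpr this
  | and φ ψ ihφ ihψ => exact Set.inter_subset_inter (ihφ hpol.1 𝒱) (ihψ hpol.2 𝒱)
  | dia a x φ ih => exact fun v ⟨s, hs, hmem⟩ => ⟨s, hs, ih hpol 𝒱 hmem⟩
  | mu Y φ ih =>
    rcases eq_or_ne Y X with rfl | hYX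
    · simp [sem]
    · refine Set.sInter_subset_sInter fun S hS => ?_
      have hcomm (A : Set (V → L.S)) : update (update 𝒱 X A) Y S = update (update 𝒱 Y S) X A :=
        update_comm hYX.symm A S 𝒱
      simp only [Set.mem_ofPred_eq, hcomm] at hS ⊢
      exact (ih (hpol.resolve_left hYX) _).trans hS
  | repl κ φ ih => exact fun v hv => ih hpol 𝒱 hv

theorem bisimInvariant_sem {φ : Formula Λ P V V2} (hwf : WellFormed φ)
    {𝒱 : V2 → Set (V → L.S)} (h𝒱 : ∀ X, BisimInvariant L (𝒱 X)) :
    BisimInvariant L (sem L φ 𝒱) := by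
  induction φ generalizing 𝒱 with
  | prop p x => exact fun v v' hv hvv' => ((hvv' x).mem_rho_iff p).mp hv
  | svar Y => exact h𝒱 Y
  | neg φ ih => exact fun v v' hv hvv' hv' => hv (ih hwf h𝒱 hv' hvv'.symm)
  | and φ ψ ihφ ihψ =>
    exact fun v v' hv hvv' => ⟨ihφ hwf.1 h𝒱 hv.1 hvv', ihψ hwf.2 h𝒱 hv.2 hvv'⟩
  | dia a x φ ih =>
    rintro v v' ⟨s, hs, hmem⟩ hvv'
    obtain ⟨s', hs', hss'⟩ := (hvv' x).exists_tr hs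
    exact ⟨s', hs', ih hwf h𝒱 hmem (hvv'.update x hss')⟩
  | mu X φ ih =>
    intro v v' hv hvv' Q hQ
    have hK𝒱 : ∀ Y, BisimInvariant L (update 𝒱 X (bisimKernel L Q) Y) :=
      (forall_update_iff 𝒱 fun Y A => BisimInvariant L A).mpr
        ⟨bisimInvariant_bisimKernel Q, fun Y _ => h𝒱 Y⟩
    have hK : sem L φ (update 𝒱 X (bisimKernel L Q)) ⊆ bisimKernel L Q :=
      fun w hw w' hww' => hQ <|
        sem_subset_of_polarity hwf.1 𝒱 (bisimKernel_subset Q) (ih hwf.2 hK𝒱 hw hww')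
    exact hv _ hK v' hvv'
  | repl κ φ ih => exact fun v v' hv hvv' => ih hwf h𝒱 hv fun z => hvv' (κ z)

end Invariance

theorem bisimulation_invariance_general {Λ P V V2 : Type} [DecidableEq V] [DecidableEq V2]
    (L : LTS Λ P) (φ : Formula Λ P V V2) (hwf : WellFormed φ)
    (v v' : V → L.S) (hv : v ∈ sem L φ (fun _ => ∅)) (hsim : BisimilarVal L v v') :
    v' ∈ sem L φ (fun _ => ∅) :=
  bisimInvariant_sem hwf (fun _ _ _ h _ => h) hv hsim

/-- Otto: Lμω is closed under bisimulation: if `φ` is a closed Lμω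
formula, `v ∈ ⟦φ⟧_L`, and `v ∼ v'` pointwise, then `v' ∈ ⟦φ⟧_L`. -/
theorem bisimulation_invariance {Λ P V V2 : Type} [DecidableEq V] [DecidableEq V2]
    (L : LTS Λ P) (φ : Formula Λ P V V2) (hwf : WellFormed φ) (hclosed : fv2 φ = ∅)
    (v v' : V → L.S) (hv : v ∈ sem L φ (fun _ => ∅)) (hsim : BisimilarVal L v v') :
    v' ∈ sem L φ (fun _ => ∅) :=
  bisimulation_invariance_general L φ hwf v v' hv hsim
end

section
/- The formula φ_bis := νX. (⋀_{p∈P} (p(x) ⇔ p(y))) ∧ (⋀_{a∈Λ} [a]_x ⟨a⟩_y X) ∧ {(x,y)←(y,x)}X characterizes bisimilarity: for every finite LTS L over finite sets Λ of labels and P of propositions and every first-order valuation v, v ∈ ⟦φ_bis⟧_L if and only if v(x) ∼ v(y), i.e. the states v(x) and v(y) are bisimilar. -/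
variable {Λ P V V2 : Type}

/-- The variable replacement swapping `x` and `y`. -/
def swapRepl {V : Type} [DecidableEq V] (x y : V) : V → V :=
  fun z => if z = x then y else if z = y then x else z

/-- The formula
`νX. ⋀_{p∈P} (p(x) ⇔ p(y)) ∧ ⋀_{a∈Λ} [a]_x⟨a⟩_y X ∧ {(x,y)←(y,x)}X`
(second-order variables are natural numbers; `X` is `0`, `1` is a dummy). -/
noncomputable def phiBis (Λ P : Type) [Fintype Λ] [Fintype P] {V : Type} [DecidableEq V]
    (x y : V) : Formula Λ P V ℕ :=
  Formula.nu 0 (.and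
    (bigAnd 1 ((Finset.univ : Finset P).toList.map fun p =>
      Formula.iff (.prop p x) (.prop p y)))
    (.and
      (bigAnd 1 ((Finset.univ : Finset Λ).toList.map fun a =>
        Formula.box a x (.dia a y (.svar 0))))
      (.repl (swapRepl x y) (.svar 0))))

/-! By Knaster–Tarski, `v ⊨ νX.φ` iff `v` lies in a set `Q` of valuations with
`Q ⊆ ⟦φ⟧[X ↦ Q]`. For the body of `φ_bis` this says that `Q` is closed under swapping `x` and
`y` and that every `a`-move of `x` can be answered by an `a`-move of `y` inside `Q`; hence
`{(w x, w y) | w ∈ Q}` is a bisimulation. Conversely a bisimulation `R` yields the post-fixed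
point `{w | R (w x) (w y)}`. -/

namespace Formula

/-- `substNeg` does not avoid capture, so it means `φ[X := ¬X]` only when `X` is not rebound. -/
def NeverBinds (X : V2) : Formula Λ P V V2 → Prop
  | .prop _ _ => True
  | .svar _ => True
  | .neg φ => φ.NeverBinds X
  | .and φ ψ => φ.NeverBinds X ∧ ψ.NeverBinds X
  | .dia _ _ φ => φ.NeverBinds X
  | .mu Y φ => Y ≠ X ∧ φ.NeverBinds X
  | .repl _ φ => φ.NeverBinds X

theorem neverBinds_bigAnd {X Y : V2} (hYX : Y ≠ X) {l : List (Formula Λ P V V2)}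
    (hl : ∀ φ ∈ l, φ.NeverBinds X) : (bigAnd Y l).NeverBinds X := by
  induction l with
  | nil => exact ⟨hYX, trivial⟩
  | cons φ l ih =>
    exact ⟨hl φ List.mem_cons_self, ih fun ψ hψ => hl ψ (List.mem_cons_of_mem _ hψ)⟩

end Formula

section Semantics

open Function

variable [DecidableEq V] [DecidableEq V2] (L : LTS Λ P)

theorem sem_substNeg (X : V2) {φ : Formula Λ P V V2} (hφ : φ.NeverBinds X)
    (𝒱 : V2 → Set (V → L.S)) :
    sem L (φ.substNeg X) 𝒱 = sem L φ (update 𝒱 X (𝒱 X)ᶜ) := by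
  induction φ generalizing 𝒱 with
  | prop p z => rfl
  | svar Y =>
    by_cases hY : Y = X
    · subst hY; simp [Formula.substNeg, sem]
    · simp [Formula.substNeg, sem, hY]
  | neg φ ih => simp only [Formula.substNeg, sem, ih hφ]
  | and φ ψ ihφ ihψ => simp only [Formula.substNeg, sem, ihφ hφ.1, ihψ hφ.2]
  | dia a z φ ih => simp only [Formula.substNeg, sem, ih hφ]
  | mu Y φ ih =>
    obtain ⟨hYX, hφ⟩ := hφ
    simp only [Formula.substNeg, sem, ih hφ, update_of_ne (Ne.symm hYX), update_comm hYX]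
  | repl κ φ ih => simp only [Formula.substNeg, sem, ih hφ]

theorem mem_sem_nu_iff (X : V2) {φ : Formula Λ P V V2} (hφ : φ.NeverBinds X)
    (𝒱 : V2 → Set (V → L.S)) (v : V → L.S) :
    v ∈ sem L (.nu X φ) 𝒱 ↔ ∃ Q : Set (V → L.S), Q ⊆ sem L φ (update 𝒱 X Q) ∧ v ∈ Q := by
  simp only [Formula.nu, sem, sem_substNeg L X hφ, update_idem, update_self,
    Set.mem_compl_iff, Set.mem_sInter, Set.mem_ofPred_eq, not_forall, exists_prop,
    Set.compl_subset_comm (s := sem L φ _)]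
  exact compl_surjective.exists.trans (by simp only [compl_compl, Set.mem_compl_iff, not_not])

theorem sem_top (X : V2) (𝒱 : V2 → Set (V → L.S)) :
    sem L (Formula.top X : Formula Λ P V V2) 𝒱 = Set.univ := by
  refine compl_eq_top.mpr (Set.eq_empty_of_subset_empty fun v hv => ?_)
  exact Set.mem_sInter.mp hv ∅ (by simp [sem])

theorem mem_sem_bigAnd_iff (X : V2) (l : List (Formula Λ P V V2)) (𝒱 : V2 → Set (V → L.S))
    (v : V → L.S) : v ∈ sem L (bigAnd X l) 𝒱 ↔ ∀ φ ∈ l, v ∈ sem L φ 𝒱 := by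
  induction l with
  | nil => simp [bigAnd, sem_top]
  | cons φ l ih =>
    simp only [bigAnd, List.foldr_cons, sem, Set.mem_inter_iff, List.forall_mem_cons] at ih ⊢
    rw [ih]

end Semantics

theorem swapRepl_left [DecidableEq V] (x y : V) : swapRepl x y x = y := by
  simp [swapRepl]

theorem swapRepl_right [DecidableEq V] (x y : V) : swapRepl x y y = x := by
  by_cases h : y = x <;> simp [swapRepl, h]

section Bisimulation

open Function

variable [DecidableEq V] {L : LTS Λ P} {x y : V}

/-- The post-fixed points of the body of `phiBis`, read as conditions on valuations. -/
def IsValuationBisimulation (L : LTS Λ P) (x y : V) (Q : Set (V → L.S)) : Prop :=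
  ∀ w ∈ Q, (∀ p, p ∈ L.rho (w x) ↔ p ∈ L.rho (w y)) ∧
    (∀ a s', L.Tr (w x) a s' → ∃ t', L.Tr (w y) a t' ∧ update (update w x s') y t' ∈ Q) ∧
    w ∘ swapRepl x y ∈ Q

theorem IsValuationBisimulation.isBisimulation {Q : Set (V → L.S)}
    (hQ : IsValuationBisimulation L x y Q) (hxy : x ≠ y) :
    IsBisimulation L fun s t => ∃ w ∈ Q, w x = s ∧ w y = t := by
  have symm : ∀ s t, (∃ w ∈ Q, w x = s ∧ w y = t) → ∃ w ∈ Q, w x = t ∧ w y = s := by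
    rintro _ _ ⟨w, hw, rfl, rfl⟩
    exact ⟨w ∘ swapRepl x y, (hQ w hw).2.2, by simp [swapRepl_left, swapRepl_right]⟩
  refine ⟨?_, fun s t => ⟨symm s t, symm t s⟩⟩
  rintro _ _ ⟨w, hw, rfl, rfl⟩
  obtain ⟨hprop, hstep, -⟩ := hQ w hw
  refine ⟨hprop, fun a s' hs' => ?_⟩
  obtain ⟨t', ht', hmem⟩ := hstep a s' hs'
  exact ⟨t', ht', _, hmem, by rw [update_of_ne hxy, update_self], update_self ..⟩

theorem IsBisimulation.isValuationBisimulation {R : L.S → L.S → Prop}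
    (hR : IsBisimulation L R) (hxy : x ≠ y) :
    IsValuationBisimulation L x y {w | R (w x) (w y)} := by
  intro w hw
  obtain ⟨hprop, hstep⟩ := hR.1 _ _ hw
  refine ⟨hprop, fun a s' hs' => ?_, ?_⟩
  · obtain ⟨t', ht', hRt⟩ := hstep a s' hs'
    refine ⟨t', ht', ?_⟩
    simpa only [Set.mem_ofPred_eq, update_self, update_of_ne hxy] using hRt
  · simpa only [Set.mem_ofPred_eq, comp_apply, swapRepl_left, swapRepl_right] using
      (hR.2 _ _).mp hw

theorem bisimilar_iff_exists_isValuationBisimulation (hxy : x ≠ y) (v : V → L.S) :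
    Bisimilar L (v x) (v y) ↔ ∃ Q, IsValuationBisimulation L x y Q ∧ v ∈ Q :=
  ⟨fun ⟨_, hR, hv⟩ => ⟨_, hR.isValuationBisimulation hxy, hv⟩,
    fun ⟨_, hQ, hv⟩ => ⟨_, hQ.isBisimulation hxy, v, hv, rfl, rfl⟩⟩

end Bisimulation

noncomputable def phiBisBody (Λ P : Type) [Fintype Λ] [Fintype P] [DecidableEq V] (x y : V) :
    Formula Λ P V ℕ :=
  .and
    (bigAnd 1 ((Finset.univ : Finset P).toList.map fun p =>
      Formula.iff (.prop p x) (.prop p y)))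
    (.and
      (bigAnd 1 ((Finset.univ : Finset Λ).toList.map fun a =>
        Formula.box a x (.dia a y (.svar 0))))
      (.repl (swapRepl x y) (.svar 0)))

section PhiBis

open Function

variable [Fintype Λ] [Fintype P] [DecidableEq V] {L : LTS Λ P} {x y : V}

theorem neverBinds_phiBisBody (x y : V) : (phiBisBody Λ P x y).NeverBinds 0 := by
  refine ⟨Formula.neverBinds_bigAnd one_ne_zero ?_, Formula.neverBinds_bigAnd one_ne_zero ?_,
    trivial⟩ <;> simp only [List.forall_mem_map] <;> exact fun _ _ => by constructor <;> trivial

theorem mem_sem_phiBisBody_iff (hxy : x ≠ y) (𝒱 : ℕ → Set (V → L.S)) (w : V → L.S) :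
    w ∈ sem L (phiBisBody Λ P x y) 𝒱 ↔
      (∀ p, p ∈ L.rho (w x) ↔ p ∈ L.rho (w y)) ∧
      (∀ a s', L.Tr (w x) a s' → ∃ t', L.Tr (w y) a t' ∧ update (update w x s') y t' ∈ 𝒱 0) ∧
      w ∘ swapRepl x y ∈ 𝒱 0 := by
  simp only [phiBisBody, sem, Set.mem_inter_iff, mem_sem_bigAnd_iff, List.forall_mem_map,
    Finset.mem_toList, Finset.mem_univ, true_implies, Formula.iff, Formula.imp, Formula.box,
    Set.mem_compl_iff, Set.mem_ofPred_eq, update_of_ne hxy.symm, not_and, not_exists,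
    not_forall, exists_prop, not_not]
  exact and_congr (forall_congr' fun _ => iff_iff_implies_and_implies.symm) Iff.rfl

theorem mem_sem_phiBis_iff (hxy : x ≠ y) (𝒱 : ℕ → Set (V → L.S)) (v : V → L.S) :
    v ∈ sem L (phiBis Λ P x y) 𝒱 ↔ ∃ Q, IsValuationBisimulation L x y Q ∧ v ∈ Q := by
  change v ∈ sem L (.nu 0 (phiBisBody Λ P x y)) 𝒱 ↔ _
  simp only [mem_sem_nu_iff L 0 (neverBinds_phiBisBody x y), Set.subset_def,
    mem_sem_phiBisBody_iff hxy, update_self, IsValuationBisimulation]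

end PhiBis

theorem phiBis_characterizes_bisimilarity_general {Λ P V : Type} [Fintype Λ] [Fintype P]
    [DecidableEq V] (x y : V) (hxy : x ≠ y) (L : LTS Λ P)
    (v : V → L.S) :
    v ∈ sem L (phiBis Λ P x y) (fun _ => ∅) ↔ Bisimilar L (v x) (v y) :=
  (mem_sem_phiBis_iff hxy _ v).trans (bisimilar_iff_exists_isValuationBisimulation hxy v).symm

/-- the formula `phiBis` characterizes bisimilarity: over any finite LTS
(with finitely many labels and propositions), a valuation `v` satisfies it iff the
states `v x` and `v y` are bisimilar. -/
theorem phiBis_characterizes_bisimilarity {Λ P V : Type} [Fintype Λ] [Fintype P]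
    [DecidableEq V] (x y : V) (hxy : x ≠ y) (L : LTS Λ P) [Fintype L.S]
    (v : V → L.S) :
    v ∈ sem L (phiBis Λ P x y) (fun _ => ∅) ↔ Bisimilar L (v x) (v y) :=
  phiBis_characterizes_bisimilarity_general x y hxy L v
end
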